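/- arXiv:2111.09910 — 3 statements merged into one kernel-verified Lean document; each statement's English description precedes it below -/
import Mathlib

section
/- For any δ with 0 < δ < 2 g(r̲) ∫_{r̲}^{r̄} (r − r̲) dr, the function h₁(r) = r − r̲ + δ satisfies the low-inequality condition h₁(r̲) ≤ 2 g(r̲) ∫ h₁, and for δ sufficiently small the function h₂(r) = 1/√(r − r̲ + δ) satisfies the high-inequality condition h₂(r̲) > 2 g(r̲) ∫ h₂. Hence there exist two positive integrable functions h₁, h₂ on [r̲, r̄] such that h₁ satisfies h₁(r̲) ≤ 2 g(r̲) ∫_{r̲}^{r̄} h₁(r) dr while h₂ satisfies h₂(r̲) > 2 g(r̲) ∫_{r̲}^{r̄} h₂(r) dr. -/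
open MeasureTheory intervalIntegral

/-!
The value of `r ↦ r - r̲ + δ` at `r̲` is `δ`, while its integral exceeds `∫ (r - r̲)`, so the
low-inequality condition holds as soon as `δ ≤ 2 g(r̲) ∫ (r - r̲)`. In contrast
`r ↦ 1 / √(r - r̲ + δ)` has value `δ^(-1/2)` at `r̲`, which blows up as `δ → 0`, while its
integral `2√(r̄ - r̲ + δ) - 2√δ` stays bounded, so small `δ` gives the high-inequality condition.
-/

lemma integral_sub_left (a b : ℝ) : ∫ r in a..b, (r - a) = (b - a) ^ 2 / 2 := by
  simp [intervalIntegral.integral_comp_sub_right (fun x => x) a, integral_id]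

lemma continuousOn_one_div_sqrt_sub_add (a : ℝ) {δ : ℝ} (hδ : 0 < δ) :
    ContinuousOn (fun r => 1 / Real.sqrt (r - a + δ)) (Set.Ici a) := by
  refine continuousOn_const.div (by fun_prop) fun r hr => ?_
  have : 0 < r - a + δ := by linarith [Set.mem_Ici.mp hr]
  positivity

lemma integral_one_div_sqrt_sub_add {a b δ : ℝ} (hab : a ≤ b) (hδ : 0 < δ) :
    ∫ r in a..b, 1 / Real.sqrt (r - a + δ) = 2 * Real.sqrt (b - a + δ) - 2 * Real.sqrt δ := by
  have hpos : ∀ x ∈ Set.uIcc a b, 0 < x - a + δ := fun x hx => by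
    rw [Set.uIcc_of_le hab] at hx
    linarith [hx.1]
  have hderiv : ∀ x ∈ Set.uIcc a b,
      HasDerivAt (fun r => 2 * Real.sqrt (r - a + δ)) (1 / Real.sqrt (x - a + δ)) x := by
    intro x hx
    refine ((((hasDerivAt_id' x).sub_const a).add_const δ).sqrt (hpos x hx).ne').const_mul 2
      |>.congr_deriv ?_
    have := (Real.sqrt_pos.mpr (hpos x hx)).ne'
    field_simp
  have hint : IntervalIntegrable (fun r => 1 / Real.sqrt (r - a + δ)) volume a b :=
    ((continuousOn_one_div_sqrt_sub_add a hδ).mono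
      (by rw [Set.uIcc_of_le hab]; exact Set.Icc_subset_Ici_self)).intervalIntegrable
  rw [integral_eq_sub_of_hasDerivAt hderiv hint]
  simp

lemma lt_one_div_sqrt {C δ : ℝ} (hδ : 0 < δ) (h : δ * C ^ 2 < 1) : C < 1 / Real.sqrt δ := by
  have hs := Real.sqrt_pos.mpr hδ
  rw [lt_div_iff₀ hs]
  nlinarith [Real.sq_sqrt hδ.le]

lemma le_mul_integral_sub_add {a b k δ : ℝ} (hab : a ≤ b) (hk : 0 ≤ k) (hδ : 0 ≤ δ)
    (h : δ ≤ k * ∫ r in a..b, (r - a)) : δ ≤ k * ∫ r in a..b, (r - a + δ) := by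
  rw [integral_add (intervalIntegrable_id.sub intervalIntegrable_const) intervalIntegrable_const,
    intervalIntegral.integral_const, smul_eq_mul]
  nlinarith [mul_nonneg hk (mul_nonneg (sub_nonneg.mpr hab) hδ)]

lemma exists_forall_mul_integral_one_div_sqrt_lt {a b k : ℝ} (hab : a ≤ b) (hk : 0 ≤ k) :
    ∃ δ₀ : ℝ, 0 < δ₀ ∧ ∀ δ : ℝ, 0 < δ → δ < δ₀ →
      k * ∫ r in a..b, 1 / Real.sqrt (r - a + δ) < 1 / Real.sqrt δ := by
  set C := 2 * k * Real.sqrt (b - a + 1) with hC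
  refine ⟨1 / (C ^ 2 + 1), by positivity, fun δ hδ hδ₀ => ?_⟩
  have hδC : δ * (C ^ 2 + 1) < 1 := (lt_div_iff₀ (by positivity)).mp hδ₀
  have hδ1 : δ < 1 := by nlinarith [sq_nonneg C]
  calc k * ∫ r in a..b, 1 / Real.sqrt (r - a + δ)
      ≤ 2 * k * Real.sqrt (b - a + δ) := by
        rw [integral_one_div_sqrt_sub_add hab hδ]
        nlinarith [Real.sqrt_nonneg δ]
    _ ≤ C := by rw [hC]; gcongr
    _ < 1 / Real.sqrt δ := lt_one_div_sqrt hδ (by nlinarith)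

/-- for a fixed positive density `g` on `[r̲, r̄]`, any
`0 < δ < 2 g(r̲) ∫ (r - r̲) dr` makes `h₁(r) = r - r̲ + δ` satisfy the
low-inequality condition, for small `δ` the function `h₂(r) = 1/√(r - r̲ + δ)`
satisfies the high-inequality condition; hence there exist two positive
integrable functions `h₁, h₂` on `[r̲, r̄]` with
`h₁(r̲) ≤ 2 g(r̲) ∫ h₁` and `h₂(r̲) > 2 g(r̲) ∫ h₂`. -/
theorem nonidentification_low_and_high
    (rl ru : ℝ) (hlt : rl < ru)
    (g : ℝ → ℝ) (hg : ∀ r ∈ Set.Icc rl ru, 0 < g r) :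
    (∀ δ : ℝ, 0 < δ → δ ≤ 2 * g rl * ∫ r in rl..ru, (r - rl) →
      (fun r => r - rl + δ) rl ≤ 2 * g rl * ∫ r in rl..ru, (r - rl + δ)) ∧
    (∃ δ₀ : ℝ, 0 < δ₀ ∧ ∀ δ : ℝ, 0 < δ → δ < δ₀ →
      (fun r => 1 / Real.sqrt (r - rl + δ)) rl >
        2 * g rl * ∫ r in rl..ru, 1 / Real.sqrt (r - rl + δ)) ∧
    (∃ h₁ h₂ : ℝ → ℝ,
      (∀ r ∈ Set.Icc rl ru, 0 < h₁ r) ∧ IntegrableOn h₁ (Set.Icc rl ru) ∧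
      (∀ r ∈ Set.Icc rl ru, 0 < h₂ r) ∧ IntegrableOn h₂ (Set.Icc rl ru) ∧
      h₁ rl ≤ 2 * g rl * ∫ r in rl..ru, h₁ r ∧
      h₂ rl > 2 * g rl * ∫ r in rl..ru, h₂ r) := by
  have hk : 0 < 2 * g rl := by linarith [hg rl ⟨le_rfl, hlt.le⟩]
  have low : ∀ δ : ℝ, 0 < δ → δ ≤ 2 * g rl * ∫ r in rl..ru, (r - rl) →
      rl - rl + δ ≤ 2 * g rl * ∫ r in rl..ru, (r - rl + δ) := fun δ hδ h => by
    simpa using le_mul_integral_sub_add hlt.le hk.le hδ.le h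
  obtain ⟨δ₀, hδ₀, high'⟩ := exists_forall_mul_integral_one_div_sqrt_lt hlt.le hk.le
  have high : ∀ δ : ℝ, 0 < δ → δ < δ₀ →
      1 / Real.sqrt (rl - rl + δ) > 2 * g rl * ∫ r in rl..ru, 1 / Real.sqrt (r - rl + δ) :=
    fun δ hδ h => by simpa using high' δ hδ h
  have hδ₁ : 0 < 2 * g rl * ∫ r in rl..ru, (r - rl) := by
    rw [integral_sub_left]
    have := sub_pos.mpr hlt
    positivity
  set δ₁ := 2 * g rl * ∫ r in rl..ru, (r - rl)
  refine ⟨low, ⟨δ₀, hδ₀, high⟩,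
    fun r => r - rl + δ₁, fun r => 1 / Real.sqrt (r - rl + δ₀ / 2),
    fun r hr => by linarith [hr.1], ?_, fun r hr => ?_, ?_, low δ₁ hδ₁ le_rfl,
    high (δ₀ / 2) (by positivity) (by linarith)⟩
  · exact (by fun_prop : Continuous fun r => r - rl + δ₁).continuousOn.integrableOn_Icc
  · have : 0 < r - rl + δ₀ / 2 := by linarith [hr.1]
    positivity
  · exact ((continuousOn_one_div_sqrt_sub_add rl (half_pos hδ₀)).mono
      Set.Icc_subset_Ici_self).integrableOn_Icc
end

section
/- Let (X, Y) be a random vector in ℝ² all of whose absolute moments are finite, and whose distribution is determined by its moments. If the distribution of the linear combination X − pY is known for all p in a set containing an open interval of ℝ, then the joint distribution of (X, Y) is identified (i.e., any two such random vectors with matching distributions of X − pY for all p in the open interval have the same joint distribution). -/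
open MeasureTheory

lemma moment_expand {Ω : Type*} [MeasurableSpace Ω] (μ : Measure Ω)
    (X Y : Ω → ℝ) (hX : Measurable X) (hY : Measurable Y)
    (hmom : ∀ j k : ℕ, Integrable (fun ω => |X ω| ^ j * |Y ω| ^ k) μ)
    (p : ℝ) (n : ℕ) :
    ∫ ω, (X ω - p * Y ω) ^ n ∂μ =
      ∑ k ∈ Finset.range (n + 1),
        ((-p) ^ (n - k) * (n.choose k : ℝ)) * ∫ ω, X ω ^ k * Y ω ^ (n - k) ∂μ := by
  have hint : ∀ j k : ℕ, Integrable (fun ω => X ω ^ j * Y ω ^ k) μ := by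
    intro j k
    refine (hmom j k).mono' (((hX.pow_const j).mul (hY.pow_const k)).aestronglyMeasurable) ?_
    filter_upwards with ω
    simp [abs_mul, abs_pow]
  have hterm : ∀ ω, (X ω - p * Y ω) ^ n =
      ∑ k ∈ Finset.range (n + 1),
        ((-p) ^ (n - k) * (n.choose k : ℝ)) * (X ω ^ k * Y ω ^ (n - k)) := by
    intro ω
    rw [show X ω - p * Y ω = X ω + (-p) * Y ω by ring, add_pow]
    refine Finset.sum_congr rfl fun k _ => ?_
    rw [mul_pow]; ring
  calc ∫ ω, (X ω - p * Y ω) ^ n ∂μ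
      = ∫ ω, ∑ k ∈ Finset.range (n + 1),
          ((-p) ^ (n - k) * (n.choose k : ℝ)) * (X ω ^ k * Y ω ^ (n - k)) ∂μ := by
        exact integral_congr_ae (Filter.Eventually.of_forall hterm)
    _ = ∑ k ∈ Finset.range (n + 1),
          ∫ ω, ((-p) ^ (n - k) * (n.choose k : ℝ)) * (X ω ^ k * Y ω ^ (n - k)) ∂μ := by
        exact integral_finset_sum _ fun k _ => (hint k (n - k)).const_mul _
    _ = ∑ k ∈ Finset.range (n + 1),
          ((-p) ^ (n - k) * (n.choose k : ℝ)) * ∫ ω, X ω ^ k * Y ω ^ (n - k) ∂μ := by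
        exact Finset.sum_congr rfl fun k _ => integral_const_mul _ _

/-- Masten 2018, Lemma 2 style: if `(X, Y)` has all absolute moments
finite and its distribution is determined by its moments, then the distributions of
the linear combinations `X - pY` for `p` ranging over an open interval identify the
joint distribution of `(X, Y)`: any two such random vectors with matching
distributions of `X - pY` for all `p` in the interval have the same joint law. -/
theorem linear_combinations_identify_joint_distribution
    {Ω₁ Ω₂ : Type*} [MeasurableSpace Ω₁] [MeasurableSpace Ω₂]
    (μ₁ : Measure Ω₁) (μ₂ : Measure Ω₂)
    [IsProbabilityMeasure μ₁] [IsProbabilityMeasure μ₂]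
    (X₁ Y₁ : Ω₁ → ℝ) (X₂ Y₂ : Ω₂ → ℝ)
    (hX₁ : Measurable X₁) (hY₁ : Measurable Y₁)
    (hX₂ : Measurable X₂) (hY₂ : Measurable Y₂)
    -- all absolute moments exist and are finite
    (hmom₁ : ∀ j k : ℕ, Integrable (fun ω => |X₁ ω| ^ j * |Y₁ ω| ^ k) μ₁)
    (hmom₂ : ∀ j k : ℕ, Integrable (fun ω => |X₂ ω| ^ j * |Y₂ ω| ^ k) μ₂)
    -- the distribution of (X, Y) is determined by its moments
    (hdet : (∀ j k : ℕ,
        (∫ ω, X₁ ω ^ j * Y₁ ω ^ k ∂μ₁) = ∫ ω, X₂ ω ^ j * Y₂ ω ^ k ∂μ₂) →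
      μ₁.map (fun ω => (X₁ ω, Y₁ ω)) = μ₂.map (fun ω => (X₂ ω, Y₂ ω)))
    (a b : ℝ) (hab : a < b)
    (hlin : ∀ p ∈ Set.Ioo a b,
      μ₁.map (fun ω => X₁ ω - p * Y₁ ω) = μ₂.map (fun ω => X₂ ω - p * Y₂ ω)) :
    μ₁.map (fun ω => (X₁ ω, Y₁ ω)) = μ₂.map (fun ω => (X₂ ω, Y₂ ω)) := by
  apply hdet
  intro j k
  set n := j + k with hn
  -- equality of moments of the linear combinations on the interval
  have hcomb : ∀ p ∈ Set.Ioo a b,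
      ∫ ω, (X₁ ω - p * Y₁ ω) ^ n ∂μ₁ = ∫ ω, (X₂ ω - p * Y₂ ω) ^ n ∂μ₂ := by
    intro p hp
    have hf₁ : Measurable fun ω => X₁ ω - p * Y₁ ω := hX₁.sub (hY₁.const_mul p)
    have hf₂ : Measurable fun ω => X₂ ω - p * Y₂ ω := hX₂.sub (hY₂.const_mul p)
    have hg : AEStronglyMeasurable (fun x : ℝ => x ^ n)
        (μ₁.map fun ω => X₁ ω - p * Y₁ ω) :=
      (measurable_id.pow_const n).aestronglyMeasurable
    calc ∫ ω, (X₁ ω - p * Y₁ ω) ^ n ∂μ₁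
        = ∫ x, x ^ n ∂(μ₁.map fun ω => X₁ ω - p * Y₁ ω) :=
          (integral_map hf₁.aemeasurable hg).symm
      _ = ∫ x, x ^ n ∂(μ₂.map fun ω => X₂ ω - p * Y₂ ω) := by rw [hlin p hp]
      _ = ∫ ω, (X₂ ω - p * Y₂ ω) ^ n ∂μ₂ :=
          integral_map hf₂.aemeasurable
            (measurable_id.pow_const n).aestronglyMeasurable
  -- define the polynomials whose evaluations give these moments
  set c₁ : ℕ → ℝ := fun k' =>
    (-1 : ℝ) ^ (n - k') * (n.choose k' : ℝ) * ∫ ω, X₁ ω ^ k' * Y₁ ω ^ (n - k') ∂μ₁ with hc₁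
  set c₂ : ℕ → ℝ := fun k' =>
    (-1 : ℝ) ^ (n - k') * (n.choose k' : ℝ) * ∫ ω, X₂ ω ^ k' * Y₂ ω ^ (n - k') ∂μ₂ with hc₂
  set P₁ : Polynomial ℝ :=
    ∑ k' ∈ Finset.range (n + 1), Polynomial.monomial (n - k') (c₁ k') with hP₁
  set P₂ : Polynomial ℝ :=
    ∑ k' ∈ Finset.range (n + 1), Polynomial.monomial (n - k') (c₂ k') with hP₂
  have heval : ∀ p ∈ Set.Ioo a b, P₁.eval p = P₂.eval p := by
    intro p hp
    have e₁ : P₁.eval p = ∫ ω, (X₁ ω - p * Y₁ ω) ^ n ∂μ₁ := by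
      rw [moment_expand μ₁ X₁ Y₁ hX₁ hY₁ hmom₁ p n, hP₁, Polynomial.eval_finset_sum]
      refine Finset.sum_congr rfl fun k' _ => ?_
      rw [Polynomial.eval_monomial, hc₁, neg_pow]
      ring
    have e₂ : P₂.eval p = ∫ ω, (X₂ ω - p * Y₂ ω) ^ n ∂μ₂ := by
      rw [moment_expand μ₂ X₂ Y₂ hX₂ hY₂ hmom₂ p n, hP₂, Polynomial.eval_finset_sum]
      refine Finset.sum_congr rfl fun k' _ => ?_
      rw [Polynomial.eval_monomial, hc₂, neg_pow]
      ring
    rw [e₁, e₂, hcomb p hp]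
  -- the polynomials agree on an infinite set, hence are equal
  have hPeq : P₁ = P₂ := by
    have hroot : Set.Ioo a b ⊆ {x | (P₁ - P₂).IsRoot x} := by
      intro x hx
      simp only [Set.mem_setOf_eq, Polynomial.IsRoot, Polynomial.eval_sub]
      rw [heval x hx, sub_self]
    have hinf : {x | (P₁ - P₂).IsRoot x}.Infinite :=
      (Set.Ioo_infinite hab).mono hroot
    have := Polynomial.eq_zero_of_infinite_isRoot _ hinf
    exact sub_eq_zero.mp this
  -- compare coefficients at degree k
  have hcoeff : ∀ (c : ℕ → ℝ),
      (∑ k' ∈ Finset.range (n + 1), Polynomial.monomial (n - k') (c k')).coeff k = c j := by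
    intro c
    rw [Polynomial.finset_sum_coeff]
    rw [Finset.sum_eq_single j]
    · simp [Polynomial.coeff_monomial, hn]
    · intro k' hk' hne
      rw [Polynomial.coeff_monomial, if_neg]
      intro hcontra
      have hk'n := Finset.mem_range.mp hk'
      exact hne (by omega)
    · intro hj
      exact absurd (Finset.mem_range.mpr (by omega)) hj
  have hkey : c₁ j = c₂ j := by
    have := congrArg (fun P : Polynomial ℝ => P.coeff k) hPeq
    simpa only [hP₁, hP₂, hcoeff] using this
  have hne : ((-1 : ℝ) ^ (n - j) * (n.choose j : ℝ)) ≠ 0 := by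
    apply mul_ne_zero
    · exact pow_ne_zero _ (by norm_num)
    · exact Nat.cast_ne_zero.mpr (Nat.choose_pos (by omega)).ne'
  have hnj : n - j = k := by omega
  have h1 : ((-1 : ℝ) ^ (n - j) * (n.choose j : ℝ)) * ∫ ω, X₁ ω ^ j * Y₁ ω ^ (n - j) ∂μ₁
      = ((-1 : ℝ) ^ (n - j) * (n.choose j : ℝ)) * ∫ ω, X₂ ω ^ j * Y₂ ω ^ (n - j) ∂μ₂ := by
    rw [hc₁, hc₂] at hkey
    simpa [mul_assoc] using hkey
  rw [← hnj]
  exact mul_left_cancel₀ hne h1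
end

section
/- Under the assumptions that v^Q = 1 almost surely, all absolute moments of (v^K, v^M) exist and are finite, the distribution of (v^K, v^M) is determined by its moments, and the quality-price demand D_Q(x^Q, p) is known for all x^Q ∈ ℝ and all p in a set B containing an open set, the joint distribution of (v^K, v^M) is identified: any two moment-determinate distributions generating the same demand function D_Q coincide. -/
open MeasureTheory


private lemma quality_aux_expand {Ω : Type*} [MeasurableSpace Ω]
    (vK vM : Ω → ℝ) (μ : Measure Ω)
    (hint : ∀ j k : ℕ, Integrable (fun ω => vK ω ^ j * vM ω ^ k) μ)
    (p : ℝ) (n : ℕ) :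
    (∫ ω, (vK ω - p * vM ω) ^ n ∂μ)
      = ∑ m ∈ Finset.range (n + 1),
          ((-1 : ℝ) ^ (m + n) * p ^ (n - m) * (n.choose m : ℝ))
            * ∫ ω, vK ω ^ m * vM ω ^ (n - m) ∂μ := by
  have he : ∀ ω, (vK ω - p * vM ω) ^ n
      = ∑ m ∈ Finset.range (n + 1),
          ((-1 : ℝ) ^ (m + n) * p ^ (n - m) * (n.choose m : ℝ))
            * (vK ω ^ m * vM ω ^ (n - m)) := by
    intro ω
    rw [sub_pow]
    refine Finset.sum_congr rfl fun m _ => ?_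
    rw [mul_pow]; ring
  rw [integral_congr_ae (Filter.Eventually.of_forall he),
    integral_finset_sum _ (fun m _ => ((hint m (n - m)).const_mul _))]
  exact Finset.sum_congr rfl fun m _ => integral_const_mul _ _

/-- under the assumptions `v^Q = 1` a.s., all absolute moments of
`(v^K, v^M)` finite, moment-determinacy of the distribution of `(v^K, v^M)`, and
knowledge of the quality-price demand `D_Q(x^Q, p) = P(v^K + v^Q x^Q - v^M p ≥ 0)`
for all `x^Q ∈ ℝ` and `p` in a set containing an open interval, the joint
distribution of `(v^K, v^M)` is identified: any two such moment-determinate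
specifications generating the same demand coincide. -/
theorem quality_demand_identifies_joint_distribution
    {Ω₁ Ω₂ : Type*} [MeasurableSpace Ω₁] [MeasurableSpace Ω₂]
    (μ₁ : Measure Ω₁) (μ₂ : Measure Ω₂)
    [IsProbabilityMeasure μ₁] [IsProbabilityMeasure μ₂]
    (vK₁ vQ₁ vM₁ : Ω₁ → ℝ) (vK₂ vQ₂ vM₂ : Ω₂ → ℝ)
    (hK₁ : Measurable vK₁) (hM₁ : Measurable vM₁)
    (hK₂ : Measurable vK₂) (hM₂ : Measurable vM₂)
    -- v^K, v^M nonnegative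
    (hKpos₁ : ∀ᵐ ω ∂μ₁, 0 ≤ vK₁ ω) (hMpos₁ : ∀ᵐ ω ∂μ₁, 0 ≤ vM₁ ω)
    (hKpos₂ : ∀ᵐ ω ∂μ₂, 0 ≤ vK₂ ω) (hMpos₂ : ∀ᵐ ω ∂μ₂, 0 ≤ vM₂ ω)
    -- v^Q = 1 almost surely
    (hQ₁ : ∀ᵐ ω ∂μ₁, vQ₁ ω = 1) (hQ₂ : ∀ᵐ ω ∂μ₂, vQ₂ ω = 1)
    -- all absolute moments exist and are finite
    (hmom₁ : ∀ j k : ℕ, Integrable (fun ω => |vK₁ ω| ^ j * |vM₁ ω| ^ k) μ₁)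
    (hmom₂ : ∀ j k : ℕ, Integrable (fun ω => |vK₂ ω| ^ j * |vM₂ ω| ^ k) μ₂)
    -- the distribution of (v^K, v^M) is determined by its moments
    (hdet : (∀ j k : ℕ,
        (∫ ω, vK₁ ω ^ j * vM₁ ω ^ k ∂μ₁) = ∫ ω, vK₂ ω ^ j * vM₂ ω ^ k ∂μ₂) →
      μ₁.map (fun ω => (vK₁ ω, vM₁ ω)) = μ₂.map (fun ω => (vK₂ ω, vM₂ ω)))
    -- demand is known on ℝ × B where B contains an open interval
    (a b : ℝ) (hab : a < b) (B : Set ℝ) (hB : Set.Ioo a b ⊆ B)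
    (hdemand : ∀ xQ : ℝ, ∀ p ∈ B,
      μ₁ {ω | vK₁ ω + vQ₁ ω * xQ - vM₁ ω * p ≥ 0} =
        μ₂ {ω | vK₂ ω + vQ₂ ω * xQ - vM₂ ω * p ≥ 0}) :
    μ₁.map (fun ω => (vK₁ ω, vM₁ ω)) = μ₂.map (fun ω => (vK₂ ω, vM₂ ω)) := by
  -- integrability of mixed (signed) moments
  have hint₁ : ∀ j k : ℕ, Integrable (fun ω => vK₁ ω ^ j * vM₁ ω ^ k) μ₁ := by
    intro j k
    have h := hmom₁ j k
    have he : (fun ω => |vK₁ ω| ^ j * |vM₁ ω| ^ k)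
        = fun ω => ‖vK₁ ω ^ j * vM₁ ω ^ k‖ := by
      funext ω; rw [Real.norm_eq_abs, abs_mul, abs_pow, abs_pow]
    rw [he] at h
    exact (integrable_norm_iff
      (((hK₁.pow_const j).mul (hM₁.pow_const k)).aestronglyMeasurable)).1 h
  have hint₂ : ∀ j k : ℕ, Integrable (fun ω => vK₂ ω ^ j * vM₂ ω ^ k) μ₂ := by
    intro j k
    have h := hmom₂ j k
    have he : (fun ω => |vK₂ ω| ^ j * |vM₂ ω| ^ k)
        = fun ω => ‖vK₂ ω ^ j * vM₂ ω ^ k‖ := by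
      funext ω; rw [Real.norm_eq_abs, abs_mul, abs_pow, abs_pow]
    rw [he] at h
    exact (integrable_norm_iff
      (((hK₂.pow_const j).mul (hM₂.pow_const k)).aestronglyMeasurable)).1 h
  -- Step 1: for p in the interval, the distributions of vK - p*vM coincide
  have hmap : ∀ p ∈ Set.Ioo a b,
      μ₁.map (fun ω => vK₁ ω - p * vM₁ ω) = μ₂.map (fun ω => vK₂ ω - p * vM₂ ω) := by
    intro p hp
    have hm1 : Measurable fun ω => vK₁ ω - p * vM₁ ω := hK₁.sub (hM₁.const_mul p)
    have hm2 : Measurable fun ω => vK₂ ω - p * vM₂ ω := hK₂.sub (hM₂.const_mul p)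
    haveI : IsProbabilityMeasure (μ₁.map fun ω => vK₁ ω - p * vM₁ ω) :=
      Measure.isProbabilityMeasure_map hm1.aemeasurable
    refine Measure.ext_of_Ici _ _ (fun t => ?_)
    rw [Measure.map_apply hm1 measurableSet_Ici, Measure.map_apply hm2 measurableSet_Ici]
    have h1 : ((fun ω => vK₁ ω - p * vM₁ ω) ⁻¹' Set.Ici t)
        =ᵐ[μ₁] {ω | vK₁ ω + vQ₁ ω * (-t) - vM₁ ω * p ≥ 0} := by
      filter_upwards [hQ₁] with ω hω
      show (t ≤ vK₁ ω - p * vM₁ ω) = (vK₁ ω + vQ₁ ω * (-t) - vM₁ ω * p ≥ 0)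
      rw [hω, eq_iff_iff]
      constructor <;> intro h <;> linarith
    have h2 : ((fun ω => vK₂ ω - p * vM₂ ω) ⁻¹' Set.Ici t)
        =ᵐ[μ₂] {ω | vK₂ ω + vQ₂ ω * (-t) - vM₂ ω * p ≥ 0} := by
      filter_upwards [hQ₂] with ω hω
      show (t ≤ vK₂ ω - p * vM₂ ω) = (vK₂ ω + vQ₂ ω * (-t) - vM₂ ω * p ≥ 0)
      rw [hω, eq_iff_iff]
      constructor <;> intro h <;> linarith
    rw [measure_congr h1, measure_congr h2]
    exact hdemand (-t) p (hB hp)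
  -- Step 2: equality of all moments of vK - p*vM
  have hXmom : ∀ p ∈ Set.Ioo a b, ∀ n : ℕ,
      (∫ ω, (vK₁ ω - p * vM₁ ω) ^ n ∂μ₁) = ∫ ω, (vK₂ ω - p * vM₂ ω) ^ n ∂μ₂ := by
    intro p hp n
    have hm1 : Measurable fun ω => vK₁ ω - p * vM₁ ω := hK₁.sub (hM₁.const_mul p)
    have hm2 : Measurable fun ω => vK₂ ω - p * vM₂ ω := hK₂.sub (hM₂.const_mul p)
    have hpn : AEStronglyMeasurable (fun x : ℝ => x ^ n)
        (μ₁.map fun ω => vK₁ ω - p * vM₁ ω) :=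
      (measurable_id.pow_const n).aestronglyMeasurable
    calc (∫ ω, (vK₁ ω - p * vM₁ ω) ^ n ∂μ₁)
        = ∫ x, x ^ n ∂(μ₁.map fun ω => vK₁ ω - p * vM₁ ω) :=
          (integral_map hm1.aemeasurable hpn).symm
      _ = ∫ x, x ^ n ∂(μ₂.map fun ω => vK₂ ω - p * vM₂ ω) := by rw [hmap p hp]
      _ = ∫ ω, (vK₂ ω - p * vM₂ ω) ^ n ∂μ₂ :=
          integral_map hm2.aemeasurable ((measurable_id.pow_const n).aestronglyMeasurable)
  -- differences of mixed moments
  set d : ℕ → ℕ → ℝ := fun j k =>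
    (∫ ω, vK₁ ω ^ j * vM₁ ω ^ k ∂μ₁) - ∫ ω, vK₂ ω ^ j * vM₂ ω ^ k ∂μ₂ with hd
  -- Step 4: polynomial identification kills all differences
  have hzero : ∀ n : ℕ, ∀ j ∈ Finset.range (n + 1), d (n - j) j = 0 := by
    intro n
    set P : Polynomial ℝ := ∑ j ∈ Finset.range (n + 1),
      Polynomial.C ((-1 : ℝ) ^ ((n - j) + n) * (n.choose (n - j) : ℝ) * d (n - j) j)
        * Polynomial.X ^ j with hP
    have hval : ∀ p ∈ Set.Ioo a b, P.IsRoot p := by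
      intro p hp
      have h := hXmom p hp n
      have h1 := quality_aux_expand vK₁ vM₁ μ₁ hint₁ p n
      have h2 := quality_aux_expand vK₂ vM₂ μ₂ hint₂ p n
      have hsum : ∑ m ∈ Finset.range (n + 1),
          ((-1 : ℝ) ^ (m + n) * p ^ (n - m) * (n.choose m : ℝ)) * d m (n - m) = 0 := by
        simp only [hd, mul_sub]
        rw [Finset.sum_sub_distrib, ← h1, ← h2, h, sub_self]
      have hrefl := Finset.sum_range_reflect
        (fun m => ((-1 : ℝ) ^ (m + n) * p ^ (n - m) * (n.choose m : ℝ)) * d m (n - m)) (n + 1)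
      simp only [Nat.add_sub_cancel] at hrefl
      have heval : P.eval p = ∑ j ∈ Finset.range (n + 1),
          ((-1 : ℝ) ^ ((n - j) + n) * (n.choose (n - j) : ℝ) * d (n - j) j) * p ^ j := by
        simp [hP, Polynomial.eval_finset_sum]
      rw [Polynomial.IsRoot, heval, ← hsum, ← hrefl]
      refine Finset.sum_congr rfl fun j hj => ?_
      rw [Finset.mem_range] at hj
      rw [Nat.sub_sub_self (Nat.lt_succ_iff.1 hj)]
      ring
    have hP0 : P = 0 :=
      Polynomial.eq_zero_of_infinite_isRoot P
        ((Set.Ioo_infinite hab).mono fun p hp => hval p hp)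
    intro j hj
    rw [Finset.mem_range, Nat.lt_succ_iff] at hj
    have hc : P.coeff j
        = (-1 : ℝ) ^ ((n - j) + n) * (n.choose (n - j) : ℝ) * d (n - j) j := by
      rw [hP, Polynomial.finset_sum_coeff]
      rw [Finset.sum_eq_single j]
      · rw [Polynomial.coeff_C_mul, Polynomial.coeff_X_pow, if_pos rfl, mul_one]
      · intro i hi hij
        rw [Polynomial.coeff_C_mul, Polynomial.coeff_X_pow, if_neg (Ne.symm hij), mul_zero]
      · intro h
        exact absurd (Finset.mem_range.2 (Nat.lt_succ_of_le hj)) h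
    rw [hP0, Polynomial.coeff_zero] at hc
    rcases mul_eq_zero.1 hc.symm with h | h
    · rcases mul_eq_zero.1 h with h' | h'
      · exact absurd h' (pow_ne_zero _ (by norm_num))
      · exact absurd h' (by exact_mod_cast (Nat.choose_pos (Nat.sub_le n j)).ne')
    · exact h
  -- conclude that all mixed moments agree
  refine hdet fun j k => ?_
  have h := hzero (j + k) k (Finset.mem_range.2 (Nat.lt_succ_of_le (Nat.le_add_left k j)))
  rw [Nat.add_sub_cancel] at h
  exact sub_eq_zero.1 h
end
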